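/- Let G be a control flow graph with entry node v₀. The collection of intervals constructed by the iterative header-selection procedure — start with header set H = {v₀}; for each header h form I(h) by repeatedly adding any node not yet in any interval all of whose immediate predecessors already lie in I(h); then add to H every node not in any interval that has at least one immediate predecessor inside the just-computed interval and at least one outside it; repeat until no headers remain — is a family of pairwise disjoint sets whose union is all of V. That is, every node of G belongs to exactly one of the constructed intervals. -/

import Mathlib

/-- A directed graph with a distinguished set of vertices and an entry node,
used to model control flow graphs. -/
structure CFGraph (α : Type*) where
  verts : Set α
  Edge : α → α → Prop
  entry : α

namespace CFGraph

variable {α : Type*}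

/-- `G` is a control flow graph: the entry node is a vertex, edges join vertices,
and every vertex is reachable from the entry node. -/
def IsCFG (G : CFGraph α) : Prop :=
  G.entry ∈ G.verts ∧ (∀ u v, G.Edge u v → u ∈ G.verts ∧ v ∈ G.verts) ∧
    ∀ v ∈ G.verts, Relation.ReflTransGen G.Edge G.entry v

/-- A closed path: a path (consecutive nodes are joined by edges) of length at least
two whose first and last nodes coincide. -/
def IsClosedPath (G : CFGraph α) (p : List α) : Prop :=
  p.Chain' G.Edge ∧ 2 ≤ p.length ∧ p.head? = p.getLast?

/-- `e` is an entry node of the set `S`: `e ∈ S` and either `e` is the entry node of the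
graph or some immediate predecessor of `e` lies outside `S`. -/
def IsEntry (G : CFGraph α) (S : Set α) (e : α) : Prop :=
  e ∈ S ∧ (e = G.entry ∨ ∃ u ∈ G.verts, u ∉ S ∧ G.Edge u e)

/-- `S` is a single-entry region with header `h` in which every closed path contains `h`. -/
def IntervalProp (G : CFGraph α) (h : α) (S : Set α) : Prop :=
  S ⊆ G.verts ∧ h ∈ S ∧ (∀ e, G.IsEntry S e ↔ e = h) ∧
    ∀ p : List α, G.IsClosedPath p → (∀ v ∈ p, v ∈ S) → h ∈ p

/-- `S` is an interval with header `h`: a maximal set containing `h` such that `h` is the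
unique entry node of `S` and every closed path lying within `S` contains `h`. -/
def IsInterval (G : CFGraph α) (h : α) (S : Set α) : Prop :=
  G.IntervalProp h S ∧ ∀ T, G.IntervalProp h T → S ⊆ T → T = S

/-- `P` is a partition of the vertices of `G` into intervals. -/
def IsIntervalPartition (G : CFGraph α) (P : Set (Set α)) : Prop :=
  (∀ S ∈ P, ∃ h, G.IsInterval h S) ∧ P.PairwiseDisjoint id ∧ ⋃₀ P = G.verts

/-- `L` is a loop structure with header `h`: `h ∈ L`, there is a back edge from some
`m ∈ L` to `h`, every node of `L` other than `h` has all its immediate predecessors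
inside `L`, and every node of `L` lies on a path within `L` starting at `h`. -/
def IsLoop (G : CFGraph α) (h : α) (L : Set α) : Prop :=
  L ⊆ G.verts ∧ h ∈ L ∧ (∃ m ∈ L, G.Edge m h) ∧
    (∀ v ∈ L, v ≠ h → ∀ u, G.Edge u v → u ∈ L) ∧
    ∀ v ∈ L, Relation.ReflTransGen (fun a b => G.Edge a b ∧ a ∈ L ∧ b ∈ L) h v

/-- The loop `L` with header `h` contains no inner loop construct: every closed path
lying entirely within `L` contains `h`. -/
def NoInnerLoop (G : CFGraph α) (h : α) (L : Set α) : Prop :=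
  ∀ p : List α, G.IsClosedPath p → (∀ v ∈ p, v ∈ L) → h ∈ p

end CFGraph

namespace CFGraph

variable {α : Type*}

/-- Membership in the interval grown from header `h`, given that the nodes in `C`
already belong to previously constructed intervals: starting from `h`, repeatedly add
any node (not already in some interval) all of whose immediate predecessors already lie
in the interval. -/
inductive IntMem (G : CFGraph α) (C : Set α) (h : α) : α → Prop
  | head : IntMem G C h h
  | step (v : α) (hv : v ∈ G.verts) (hvC : v ∉ C)
      (hpre : ∀ u, G.Edge u v → IntMem G C h u) : IntMem G C h v

/-- The interval constructed from header `h`, given already-covered nodes `C`. -/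
def intervalOf (G : CFGraph α) (C : Set α) (h : α) : Set α := {v | IntMem G C h v}

/-- The new headers produced after computing an interval `I`: nodes not in any interval
(`C` is the set of covered nodes, including `I`) having at least one immediate
predecessor inside the just-computed interval `I` and at least one outside it. -/
def newHeaders (G : CFGraph α) (C : Set α) (I : Set α) : Set α :=
  {v | v ∈ G.verts ∧ v ∉ C ∧ (∃ m₁, G.Edge m₁ v ∧ m₁ ∈ I) ∧ ∃ m₂, G.Edge m₂ v ∧ m₂ ∉ I}

/-- `Run G H C 𝒮`: starting from the pending header set `H` and covered node set `C`,
the iterative header-selection procedure can terminate (with no headers remaining)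
having constructed precisely the collection `𝒮` of further intervals. -/
inductive Run (G : CFGraph α) : Set α → Set α → Set (Set α) → Prop
  | done (C : Set α) : Run G ∅ C ∅
  | step (H C : Set α) (h : α) (𝒮 : Set (Set α)) (hh : h ∈ H)
      (hrest : Run G ((H \ {h}) ∪ newHeaders G (C ∪ intervalOf G C h) (intervalOf G C h))
        (C ∪ intervalOf G C h) 𝒮) :
      Run G H C (insert (intervalOf G C h) 𝒮)

end CFGraph


/-!
The procedure keeps an invariant on the pending headers `H` and the covered nodes `C`:
headers are uncovered vertices, every edge leaving `C` enters `C ∪ H`, `v₀ ∈ C ∪ H`, and a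
header that is not alone in `H` has a predecessor in `C`. A node other than the header is
absorbed into an interval only when all its predecessors already lie in that interval, which
is disjoint from `C`; so no pending header is swallowed by another header's interval, and
each new interval consists of uncovered vertices only, which gives disjointness. When no
header is left, `C` contains `v₀` and is closed under edges, so it contains every node
reachable from `v₀`, i.e. all of `V`.
-/

namespace CFGraph

variable {α : Type*} {G : CFGraph α} {H C : Set α} {h : α}

theorem IntMem.eq_or_mem_diff {v : α} (hv : IntMem G C h v) : v = h ∨ v ∈ G.verts \ C := by
  cases hv with
  | head => exact Or.inl rfl
  | step v hv hvC _ => exact Or.inr ⟨hv, hvC⟩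

theorem mem_intervalOf_self : h ∈ intervalOf G C h := IntMem.head

theorem intervalOf_subset_diff (hh : h ∈ G.verts \ C) : intervalOf G C h ⊆ G.verts \ C := by
  intro v hv
  rcases IntMem.eq_or_mem_diff hv with rfl | hv
  exacts [hh, hv]

theorem notMem_intervalOf_of_edge {u x : α} (hhC : h ∉ C) (hxh : x ≠ h) (huC : u ∈ C)
    (hux : G.Edge u x) : x ∉ intervalOf G C h := by
  intro hx
  cases hx with
  | head => exact hxh rfl
  | step _ _ _ hpre =>
    rcases IntMem.eq_or_mem_diff (hpre u hux) with rfl | hu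
    exacts [hhC huC, hu.2 huC]

theorem mem_union_newHeaders_of_edge (hE : ∀ u v, G.Edge u v → v ∈ G.verts) {u v : α}
    (huv : G.Edge u v) (hu : u ∈ intervalOf G C h) :
    v ∈ C ∪ intervalOf G C h ∪ newHeaders G (C ∪ intervalOf G C h) (intervalOf G C h) := by
  by_cases hvC : v ∈ C ∪ intervalOf G C h
  · exact Or.inl hvC
  refine Or.inr ⟨hE u v huv, hvC, ⟨u, huv, hu⟩, ?_⟩
  by_contra! hpre
  exact hvC (Or.inr (IntMem.step v (hE u v huv) (fun h' => hvC (Or.inl h')) hpre))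

variable (G) in
structure RunInv (H C : Set α) : Prop where
  subset_diff : H ⊆ G.verts \ C
  edge_mem : ∀ u v, G.Edge u v → u ∈ C → v ∈ C ∪ H
  entry_mem : G.entry ∈ C ∪ H
  exists_pred : ∀ x ∈ H, ∀ y ∈ H, x ≠ y → ∃ u ∈ C, G.Edge u x

theorem runInv_start (he : G.entry ∈ G.verts) : RunInv G {G.entry} ∅ where
  subset_diff := by simpa using he
  edge_mem _ _ _ hu := absurd hu (Set.notMem_empty _)
  entry_mem := Or.inr rfl
  exists_pred x hx y hy hxy := absurd (hx.trans hy.symm) hxy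

namespace RunInv

theorem notMem_intervalOf (hI : RunInv G H C) (hh : h ∈ H) {x : α} (hx : x ∈ H)
    (hxh : x ≠ h) : x ∉ intervalOf G C h := by
  obtain ⟨u, huC, hux⟩ := hI.exists_pred x hx h hh hxh
  exact notMem_intervalOf_of_edge (hI.subset_diff hh).2 hxh huC hux

theorem step (hE : ∀ u v, G.Edge u v → v ∈ G.verts) (hI : RunInv G H C) (hh : h ∈ H) :
    RunInv G ((H \ {h}) ∪ newHeaders G (C ∪ intervalOf G C h) (intervalOf G C h))
      (C ∪ intervalOf G C h) := by
  have hpred : ∀ x ∈ (H \ {h}) ∪ newHeaders G (C ∪ intervalOf G C h) (intervalOf G C h),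
      ∃ u ∈ C ∪ intervalOf G C h, G.Edge u x := by
    rintro x (⟨hx, hxh⟩ | ⟨-, -, ⟨u, hux, hu⟩, -⟩)
    · obtain ⟨u, huC, hux⟩ := hI.exists_pred x hx h hh hxh
      exact ⟨u, Or.inl huC, hux⟩
    · exact ⟨u, Or.inr hu, hux⟩
  refine ⟨?_, ?_, ?_, fun x hx _ _ _ => hpred x hx⟩
  · rintro x (⟨hx, hxh⟩ | ⟨hxV, hxC, -⟩)
    · refine ⟨(hI.subset_diff hx).1, ?_⟩
      rintro (hxC | hxI)
      exacts [(hI.subset_diff hx).2 hxC, hI.notMem_intervalOf hh hx hxh hxI]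
    · exact ⟨hxV, hxC⟩
  · rintro u v huv (huC | huI)
    · rcases hI.edge_mem u v huv huC with hvC | hvH
      · exact Or.inl (Or.inl hvC)
      by_cases hvh : v = h
      · exact Or.inl (Or.inr (hvh ▸ mem_intervalOf_self))
      · exact Or.inr (Or.inl ⟨hvH, hvh⟩)
    · rcases mem_union_newHeaders_of_edge hE huv huI with hv | hv
      exacts [Or.inl hv, Or.inr (Or.inr hv)]
  · rcases hI.entry_mem with hC | hH
    · exact Or.inl (Or.inl hC)
    by_cases heh : G.entry = h
    · exact Or.inl (Or.inr (heh ▸ mem_intervalOf_self))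
    · exact Or.inr (Or.inl ⟨hH, heh⟩)

theorem verts_subset_of_empty (hreach : ∀ v ∈ G.verts, Relation.ReflTransGen G.Edge G.entry v)
    (hI : RunInv G ∅ C) : G.verts ⊆ C := by
  have hentry : G.entry ∈ C := by simpa using hI.entry_mem
  intro v hv
  have hr := hreach v hv
  clear hv
  induction hr with
  | refl => exact hentry
  | tail _ huv ih => simpa using hI.edge_mem _ _ huv ih

end RunInv

theorem Run.pairwiseDisjoint_and_sUnion_eq_diff (hG : G.IsCFG) {𝒮 : Set (Set α)}
    (hrun : Run G H C 𝒮) (hI : RunInv G H C) :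
    𝒮.PairwiseDisjoint id ∧ ⋃₀ 𝒮 = G.verts \ C := by
  induction hrun with
  | done C =>
    refine ⟨Set.pairwiseDisjoint_empty, ?_⟩
    rw [Set.sUnion_empty, eq_comm, Set.sdiff_eq_empty]
    exact hI.verts_subset_of_empty hG.2.2
  | step H C h 𝒮 hh _ ih =>
    obtain ⟨hdisj, hunion⟩ := ih (hI.step (fun u v huv => (hG.2.1 u v huv).2) hh)
    have hIsub := intervalOf_subset_diff (G := G) (hI.subset_diff hh)
    refine ⟨hdisj.insert fun S hS _ => ?_, ?_⟩
    · have hSsub : S ⊆ G.verts \ (C ∪ intervalOf G C h) := hunion ▸ Set.subset_sUnion_of_mem hS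
      exact Set.disjoint_left.2 fun x hxI hxS => (hSsub hxS).2 (Or.inr hxI)
    · rw [Set.sUnion_insert, hunion, ← Set.sdiff_sdiff, Set.union_sdiff_self,
        Set.union_eq_right.2 hIsub]

end CFGraph

open CFGraph in
/-- Let `G` be a control flow graph with entry node `v₀`.  The
collection `𝒮` of intervals constructed by the iterative header-selection procedure
(starting with header set `{v₀}` and nothing covered) is a family of pairwise disjoint
sets whose union is all of `V`; that is, every node of `G` belongs to exactly one of
the constructed intervals. -/
theorem run_is_partition {α : Type*} (G : CFGraph α) (hG : G.IsCFG)
    (𝒮 : Set (Set α)) (hrun : Run G {G.entry} ∅ 𝒮) :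
    𝒮.PairwiseDisjoint id ∧ ⋃₀ 𝒮 = G.verts := by
  simpa using hrun.pairwiseDisjoint_and_sUnion_eq_diff hG (runInv_start hG.1)
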